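/- arXiv:2108.12813 — 2 statements merged into one kernel-verified Lean document; each statement's English description precedes it below -/
import Mathlib

section
/- The operators π_L(a_1^+) = −∂_{ξ₁}, π_L(a_2^+) = −∂_{ξ₂} + (ω/2)∂_{ξ₁}, π_L(b_1^+) = −∂_{η₁}, π_L(b_2^+) = −∂_{η₂} − (ω²/4)∂_{η₁} + ω∂_ζ, π_L(c^+) = −∂_ζ + (ω/2)∂_{η₁}, π_L(d^+) = −∂_ω satisfy [π_L(b_2^+), π_L(d^+)] = −π_L(c^+), [π_L(a_2^+), π_L(d^+)] = −(1/2)π_L(a_1^+), [π_L(c^+), π_L(d^+)] = −(1/2)π_L(b_1^+), and all other pairwise commutators vanish. -/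
set_option maxHeartbeats 1000000

/- Coordinates: 0 = ξ₁, 1 = ξ₂, 2 = η₁, 3 = η₂, 4 = ζ, 5 = ω -/

/-- smooth functions of six real variables -/
abbrev F6 := (Fin 6 → ℝ) → ℝ

/-- partial derivative in the i-th coordinate -/
noncomputable def pd (i : Fin 6) (f : F6) : F6 := fun x => fderiv ℝ f x (Pi.single i 1)

/-- differential operators -/
abbrev Op := F6 → F6

/-- commutator of operators -/
def opComm (A B : Op) : Op := fun f => A (B f) - B (A f)

noncomputable def La1 : Op := fun f x => -(pd 0 f x)
noncomputable def La2 : Op := fun f x => -(pd 1 f x) + x 5 / 2 * pd 0 f x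
noncomputable def Lb1 : Op := fun f x => -(pd 2 f x)
noncomputable def Lb2 : Op := fun f x =>
  -(pd 3 f x) - x 5 ^ 2 / 4 * pd 2 f x + x 5 * pd 4 f x
noncomputable def Lc : Op := fun f x => -(pd 4 f x) + x 5 / 2 * pd 2 f x
noncomputable def Ld : Op := fun f x => -(pd 5 f x)

lemma contDiff_pd (f : F6) (hf : ContDiff ℝ (⊤ : ℕ∞) f) (i : Fin 6) : ContDiff ℝ (⊤ : ℕ∞) (pd i f) := by
  unfold pd
  exact (hf.fderiv_right (by simp)).clm_apply contDiff_const

lemma diff_pd (f : F6) (hf : ContDiff ℝ (⊤ : ℕ∞) f) (i : Fin 6) : Differentiable ℝ (pd i f) :=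
  (contDiff_pd f hf i).differentiable (by simp)

lemma pd_swap (f : F6) (hf : ContDiff ℝ (⊤ : ℕ∞) f) {i j : Fin 6} (_h : j < i) (x : Fin 6 → ℝ) :
    pd i (pd j f) x = pd j (pd i f) x := by
  have hd : Differentiable ℝ (fderiv ℝ f) := (hf.fderiv_right (m := (⊤ : ℕ∞)) (by simp)).differentiable (by simp)
  have h1 : ∀ y, HasFDerivAt f (fderiv ℝ f y) y := fun y => (hf.differentiable (by simp) y).hasFDerivAt
  have h2 : HasFDerivAt (fderiv ℝ f) (fderiv ℝ (fderiv ℝ f) x) x := (hd x).hasFDerivAt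
  have hsymm := second_derivative_symmetric h1 h2 (Pi.single j 1) (Pi.single i 1)
  have e : ∀ a b : Fin 6,
      pd a (pd b f) x = (fderiv ℝ (fderiv ℝ f) x (Pi.single a 1)) (Pi.single b 1) := by
    intro a b
    unfold pd
    rw [fderiv_clm_apply (hd x) (differentiableAt_const _)]
    simp
  rw [e, e, hsymm]

lemma pdx_neg (g : F6) (i : Fin 6) (x : Fin 6 → ℝ) :
    pd i (fun y => -(g y)) x = -(pd i g x) := by
  simp [pd, fderiv_neg]

lemma pdx_add (g h : F6) (hg : Differentiable ℝ g) (hh : Differentiable ℝ h) (i : Fin 6)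
    (x : Fin 6 → ℝ) : pd i (fun y => g y + h y) x = pd i g x + pd i h x := by
  simp [pd, fderiv_fun_add (hg x) (hh x)]

lemma pdx_sub (g h : F6) (hg : Differentiable ℝ g) (hh : Differentiable ℝ h) (i : Fin 6)
    (x : Fin 6 → ℝ) : pd i (fun y => g y - h y) x = pd i g x - pd i h x := by
  simp [pd, fderiv_fun_sub (hg x) (hh x)]

lemma pdx_mul (c g : F6) (hc : Differentiable ℝ c) (hg : Differentiable ℝ g) (i : Fin 6)
    (x : Fin 6 → ℝ) : pd i (fun y => c y * g y) x = c x * pd i g x + g x * pd i c x := by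
  simp [pd, fderiv_fun_mul (hc x) (hg x)]

lemma pdx_coord (i : Fin 6) (x : Fin 6 → ℝ) :
    pd i (fun y : Fin 6 → ℝ => y 5) x = (Pi.single i 1 : Fin 6 → ℝ) 5 := by
  have : fderiv ℝ (fun y : Fin 6 → ℝ => y 5) x = ContinuousLinearMap.proj 5 :=
    (hasFDerivAt_apply (𝕜 := ℝ) (5 : Fin 6) x).fderiv
  simp [pd, this]

lemma pdx_coord_div2 (i : Fin 6) (x : Fin 6 → ℝ) :
    pd i (fun y : Fin 6 → ℝ => y 5 / 2) x = (Pi.single i 1 : Fin 6 → ℝ) 5 / 2 := by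
  have h5 := hasFDerivAt_apply (𝕜 := ℝ) (5 : Fin 6) x
  have he : (fun y : Fin 6 → ℝ => y 5 / 2) = fun y : Fin 6 → ℝ => y 5 * (1/2 : ℝ) := by
    funext y; ring
  have h := (h5.mul_const (1/2 : ℝ)).fderiv
  simp only [pd]
  rw [he, h]
  simp
  ring

lemma pdx_sq4 (i : Fin 6) (x : Fin 6 → ℝ) :
    pd i (fun y : Fin 6 → ℝ => y 5 ^ 2 / 4) x = x 5 * (Pi.single i 1 : Fin 6 → ℝ) 5 / 2 := by
  have h5 := hasFDerivAt_apply (𝕜 := ℝ) (5 : Fin 6) x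
  have he : (fun y : Fin 6 → ℝ => y 5 ^ 2 / 4) = fun y : Fin 6 → ℝ => (y 5 * y 5) * (1/4 : ℝ) := by
    funext y; ring
  have h : fderiv ℝ (fun y : Fin 6 → ℝ => (y 5 * y 5) * (1/4 : ℝ)) x = _ :=
    ((h5.mul h5).mul_const (1/4 : ℝ)).fderiv
  simp only [pd]
  rw [he, h]
  simp
  ring

private lemma hprj : Differentiable ℝ (fun y : Fin 6 → ℝ => y 5) := differentiable_apply 5
private lemma h52 : Differentiable ℝ (fun y : Fin 6 → ℝ => y 5 / 2) := by fun_prop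
private lemma h54 : Differentiable ℝ (fun y : Fin 6 → ℝ => y 5 ^ 2 / 4) := by fun_prop

lemma pdLa2x (f : F6) (hf : ContDiff ℝ (⊤ : ℕ∞) f) (j : Fin 6) (x : Fin 6 → ℝ) :
    pd j (fun y : Fin 6 → ℝ => -(pd 1 f y) + y 5 / 2 * pd 0 f y) x =
      -(pd j (pd 1 f) x) +
        (x 5 / 2 * pd j (pd 0 f) x + pd 0 f x * ((Pi.single j 1 : Fin 6 → ℝ) 5 / 2)) := by
  have hd0 := diff_pd f hf 0
  have hd1 := diff_pd f hf 1
  simp only [pdx_add _ _ hd1.fun_neg (h52.fun_mul hd0), pdx_mul _ _ h52 hd0, pdx_neg, pdx_coord_div2]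

lemma pdLcx (f : F6) (hf : ContDiff ℝ (⊤ : ℕ∞) f) (j : Fin 6) (x : Fin 6 → ℝ) :
    pd j (fun y : Fin 6 → ℝ => -(pd 4 f y) + y 5 / 2 * pd 2 f y) x =
      -(pd j (pd 4 f) x) +
        (x 5 / 2 * pd j (pd 2 f) x + pd 2 f x * ((Pi.single j 1 : Fin 6 → ℝ) 5 / 2)) := by
  have hd2 := diff_pd f hf 2
  have hd4 := diff_pd f hf 4
  simp only [pdx_add _ _ hd4.fun_neg (h52.fun_mul hd2), pdx_mul _ _ h52 hd2, pdx_neg, pdx_coord_div2]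

lemma pdLb2x (f : F6) (hf : ContDiff ℝ (⊤ : ℕ∞) f) (j : Fin 6) (x : Fin 6 → ℝ) :
    pd j (fun y : Fin 6 → ℝ => -(pd 3 f y) - y 5 ^ 2 / 4 * pd 2 f y + y 5 * pd 4 f y) x =
      (-(pd j (pd 3 f) x) -
        (x 5 ^ 2 / 4 * pd j (pd 2 f) x + pd 2 f x * (x 5 * (Pi.single j 1 : Fin 6 → ℝ) 5 / 2))) +
        (x 5 * pd j (pd 4 f) x + pd 4 f x * (Pi.single j 1 : Fin 6 → ℝ) 5) := by
  have hd2 := diff_pd f hf 2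
  have hd3 := diff_pd f hf 3
  have hd4 := diff_pd f hf 4
  simp only [pdx_add _ _ (hd3.fun_neg.fun_sub (h54.fun_mul hd2)) (hprj.fun_mul hd4),
    pdx_sub _ _ hd3.fun_neg (h54.fun_mul hd2), pdx_mul _ _ h54 hd2, pdx_mul _ _ hprj hd4,
    pdx_neg, pdx_coord, pdx_coord_div2, pdx_sq4]

lemma comm_self (f : F6) (A : Op) : opComm A A f = 0 := by
  funext x; simp [opComm]

lemma comm_anti (f : F6) (A B : Op) (h : opComm A B f = 0) : opComm B A f = 0 := by
  funext x
  have hx : opComm A B f x = 0 := by rw [h]; rfl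
  simp only [opComm, Pi.sub_apply, Pi.zero_apply] at hx ⊢
  linarith

lemma comm_a1a2 (f : F6) (hf : ContDiff ℝ (⊤ : ℕ∞) f) : opComm La1 La2 f = 0 := by
  funext x
  unfold opComm La1 La2
  simp only [Pi.sub_apply, Pi.zero_apply, pdx_neg, pdLa2x f hf]
  simp (disch := decide) only [pd_swap f hf]
  simp [Pi.single_apply]
  ring

lemma comm_a1b1 (f : F6) (hf : ContDiff ℝ (⊤ : ℕ∞) f) : opComm La1 Lb1 f = 0 := by
  funext x
  unfold opComm La1 Lb1
  simp only [Pi.sub_apply, Pi.zero_apply, pdx_neg]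
  simp (disch := decide) only [pd_swap f hf]
  ring

lemma comm_a1b2 (f : F6) (hf : ContDiff ℝ (⊤ : ℕ∞) f) : opComm La1 Lb2 f = 0 := by
  funext x
  unfold opComm La1 Lb2
  simp only [Pi.sub_apply, Pi.zero_apply, pdx_neg, pdLb2x f hf]
  simp (disch := decide) only [pd_swap f hf]
  simp [Pi.single_apply]
  ring

lemma comm_a1c (f : F6) (hf : ContDiff ℝ (⊤ : ℕ∞) f) : opComm La1 Lc f = 0 := by
  funext x
  unfold opComm La1 Lc
  simp only [Pi.sub_apply, Pi.zero_apply, pdx_neg, pdLcx f hf]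
  simp (disch := decide) only [pd_swap f hf]
  simp [Pi.single_apply]
  ring

lemma comm_a1d (f : F6) (hf : ContDiff ℝ (⊤ : ℕ∞) f) : opComm La1 Ld f = 0 := by
  funext x
  unfold opComm La1 Ld
  simp only [Pi.sub_apply, Pi.zero_apply, pdx_neg]
  simp (disch := decide) only [pd_swap f hf]
  ring

lemma comm_a2b1 (f : F6) (hf : ContDiff ℝ (⊤ : ℕ∞) f) : opComm La2 Lb1 f = 0 := by
  funext x
  unfold opComm La2 Lb1
  simp only [Pi.sub_apply, Pi.zero_apply, pdx_neg, pdLa2x f hf]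
  simp (disch := decide) only [pd_swap f hf]
  simp [Pi.single_apply]
  ring

lemma comm_a2b2 (f : F6) (hf : ContDiff ℝ (⊤ : ℕ∞) f) : opComm La2 Lb2 f = 0 := by
  funext x
  unfold opComm La2 Lb2
  simp only [Pi.sub_apply, Pi.zero_apply, pdx_neg, pdLa2x f hf, pdLb2x f hf]
  simp (disch := decide) only [pd_swap f hf]
  simp [Pi.single_apply]
  ring

lemma comm_a2c (f : F6) (hf : ContDiff ℝ (⊤ : ℕ∞) f) : opComm La2 Lc f = 0 := by
  funext x
  unfold opComm La2 Lc
  simp only [Pi.sub_apply, Pi.zero_apply, pdx_neg, pdLa2x f hf, pdLcx f hf]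
  simp (disch := decide) only [pd_swap f hf]
  simp [Pi.single_apply]
  ring

lemma comm_b1b2 (f : F6) (hf : ContDiff ℝ (⊤ : ℕ∞) f) : opComm Lb1 Lb2 f = 0 := by
  funext x
  unfold opComm Lb1 Lb2
  simp only [Pi.sub_apply, Pi.zero_apply, pdx_neg, pdLb2x f hf]
  simp (disch := decide) only [pd_swap f hf]
  simp [Pi.single_apply]
  ring

lemma comm_b1c (f : F6) (hf : ContDiff ℝ (⊤ : ℕ∞) f) : opComm Lb1 Lc f = 0 := by
  funext x
  unfold opComm Lb1 Lc
  simp only [Pi.sub_apply, Pi.zero_apply, pdx_neg, pdLcx f hf]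
  simp (disch := decide) only [pd_swap f hf]
  simp [Pi.single_apply]
  ring

lemma comm_b1d (f : F6) (hf : ContDiff ℝ (⊤ : ℕ∞) f) : opComm Lb1 Ld f = 0 := by
  funext x
  unfold opComm Lb1 Ld
  simp only [Pi.sub_apply, Pi.zero_apply, pdx_neg]
  simp (disch := decide) only [pd_swap f hf]
  ring

lemma comm_b2c (f : F6) (hf : ContDiff ℝ (⊤ : ℕ∞) f) : opComm Lb2 Lc f = 0 := by
  funext x
  unfold opComm Lb2 Lc
  simp only [Pi.sub_apply, Pi.zero_apply, pdx_neg, pdLb2x f hf, pdLcx f hf]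
  simp (disch := decide) only [pd_swap f hf]
  simp [Pi.single_apply]
  ring

lemma comm_b2d (f : F6) (hf : ContDiff ℝ (⊤ : ℕ∞) f) : opComm Lb2 Ld f = fun x => -(Lc f x) := by
  funext x
  unfold opComm Lb2 Lc Ld
  simp only [Pi.sub_apply, pdx_neg, pdLb2x f hf]
  simp (disch := decide) only [pd_swap f hf]
  simp [Pi.single_apply]
  ring

lemma comm_a2d (f : F6) (hf : ContDiff ℝ (⊤ : ℕ∞) f) : opComm La2 Ld f = fun x => -(1/2) * La1 f x := by
  funext x
  unfold opComm La1 La2 Ld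
  simp only [Pi.sub_apply, pdx_neg, pdLa2x f hf]
  simp (disch := decide) only [pd_swap f hf]
  simp [Pi.single_apply]
  ring

lemma comm_cd (f : F6) (hf : ContDiff ℝ (⊤ : ℕ∞) f) : opComm Lc Ld f = fun x => -(1/2) * Lb1 f x := by
  funext x
  unfold opComm Lb1 Lc Ld
  simp only [Pi.sub_apply, pdx_neg, pdLcx f hf]
  simp (disch := decide) only [pd_swap f hf]
  simp [Pi.single_apply]
  ring

theorem stmt_11 (f : F6) (hf : ContDiff ℝ (⊤ : ℕ∞) f) :
    (opComm Lb2 Ld f = fun x => -(Lc f x)) ∧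
    (opComm La2 Ld f = fun x => -(1/2) * La1 f x) ∧
    (opComm Lc Ld f = fun x => -(1/2) * Lb1 f x) ∧
    (∀ i j : Fin 6,
      ¬((i = 3 ∧ j = 5) ∨ (i = 5 ∧ j = 3) ∨ (i = 1 ∧ j = 5) ∨ (i = 5 ∧ j = 1) ∨
        (i = 4 ∧ j = 5) ∨ (i = 5 ∧ j = 4)) →
      opComm (![La1, La2, Lb1, Lb2, Lc, Ld] i) (![La1, La2, Lb1, Lb2, Lc, Ld] j) f = 0) := by
  refine ⟨comm_b2d f hf, comm_a2d f hf, comm_cd f hf, ?_⟩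
  intro i j h
  fin_cases i <;> fin_cases j <;>
    first
    | exact absurd (by decide) h
    | exact comm_self f _
    | exact comm_a1a2 f hf
    | exact comm_anti f _ _ (comm_a1a2 f hf)
    | exact comm_a1b1 f hf
    | exact comm_anti f _ _ (comm_a1b1 f hf)
    | exact comm_a1b2 f hf
    | exact comm_anti f _ _ (comm_a1b2 f hf)
    | exact comm_a1c f hf
    | exact comm_anti f _ _ (comm_a1c f hf)
    | exact comm_a1d f hf
    | exact comm_anti f _ _ (comm_a1d f hf)
    | exact comm_a2b1 f hf
    | exact comm_anti f _ _ (comm_a2b1 f hf)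
    | exact comm_a2b2 f hf
    | exact comm_anti f _ _ (comm_a2b2 f hf)
    | exact comm_a2c f hf
    | exact comm_anti f _ _ (comm_a2c f hf)
    | exact comm_b1b2 f hf
    | exact comm_anti f _ _ (comm_b1b2 f hf)
    | exact comm_b1c f hf
    | exact comm_anti f _ _ (comm_b1c f hf)
    | exact comm_b1d f hf
    | exact comm_anti f _ _ (comm_b1d f hf)
    | exact comm_b2c f hf
    | exact comm_anti f _ _ (comm_b2c f hf)
end

section
/- The invariant differential operator D_(i) = (∂_ω − (ξ₂/2)∂_{ξ₁} − (ζ/2)∂_{η₁} − η₂∂_ζ)^{p} commutes with the left-action operators π_L(a_k^+), π_L(b_k^+), π_L(c^+), π_L(d^+) for all positive integers p, i.e., [D_(i), π_L(Y)] = 0 for Y ∈ {a_1^+, a_2^+, b_1^+, b_2^+, c^+, d^+}. -/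
/-- D_(i) base operator: π_R(d⁺) = ∂_ω − (ξ₂/2)∂_{ξ₁} − (ζ/2)∂_{η₁} − η₂ ∂_ζ -/
noncomputable def Dop : Op := fun f x =>
  pd 5 f x - x 1 / 2 * pd 0 f x - x 4 / 2 * pd 2 f x - x 3 * pd 4 f x

/-! ### Auxiliary lemmas -/

@[simp] lemma cons_val_five {α : Type*} (a b c d e f : α) :
    (![a, b, c, d, e, f] : Fin 6 → α) 5 = f := rfl

lemma pd_smooth {f : F6} (hf : ContDiff ℝ (⊤ : ℕ∞) f) (i : Fin 6) : ContDiff ℝ (⊤ : ℕ∞) (pd i f) :=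
  (hf.fderiv_right (by simp)).clm_apply contDiff_const

lemma pd_comm {f : F6} (hf : ContDiff ℝ (⊤ : ℕ∞) f) (i j : Fin 6) (x : Fin 6 → ℝ) :
    pd i (pd j f) x = pd j (pd i f) x := by
  have hs : IsSymmSndFDerivAt ℝ f x := hf.contDiffAt.isSymmSndFDerivAt (by rw [minSmoothness_of_isRCLikeNormedField]; exact WithTop.coe_le_coe.mpr le_top)
  have hd : Differentiable ℝ (fderiv ℝ f) :=
    (hf.fderiv_right (by exact_mod_cast le_top : ((1 : ℕ∞) : WithTop ℕ∞) + 1 ≤ ((⊤ : ℕ∞) : WithTop ℕ∞))).differentiable (by simp)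
  have key : ∀ (v : Fin 6 → ℝ) (y : Fin 6 → ℝ),
      fderiv ℝ (fun z => fderiv ℝ f z v) y = (fderiv ℝ (fderiv ℝ f) y).flip v := by
    intro v y
    rw [fderiv_clm_apply (hd y) (differentiableAt_const v)]
    simp
  show (fderiv ℝ (fun z => fderiv ℝ f z (Pi.single j 1)) x) (Pi.single i 1)
      = (fderiv ℝ (fun z => fderiv ℝ f z (Pi.single i 1)) x) (Pi.single j 1)
  rw [key, key]
  exact hs _ _

@[simp] lemma diffAt_coord (j : Fin 6) (x : Fin 6 → ℝ) :
    DifferentiableAt ℝ (fun x : Fin 6 → ℝ => x j) x :=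
  ((ContinuousLinearMap.proj j : (Fin 6 → ℝ) →L[ℝ] ℝ).differentiable x)

@[simp] lemma diffAt_sq (x : Fin 6 → ℝ) :
    DifferentiableAt ℝ (fun x : Fin 6 → ℝ => x 5 * x 5) x :=
  (diffAt_coord 5 x).mul (diffAt_coord 5 x)

lemma pd_coord (k j : Fin 6) (x : Fin 6 → ℝ) :
    pd k (fun x => x j) x = if j = k then 1 else 0 := by
  have h : fderiv ℝ (fun x : Fin 6 → ℝ => x j) x = ContinuousLinearMap.proj j :=
    (ContinuousLinearMap.proj j : (Fin 6 → ℝ) →L[ℝ] ℝ).fderiv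
  simp [pd, h, Pi.single_apply]

lemma pd_const (k : Fin 6) (c : ℝ) (x : Fin 6 → ℝ) : pd k (fun _ => c) x = 0 := by
  simp [pd]

lemma pd_neg (g : F6) (k : Fin 6) (x : Fin 6 → ℝ) :
    pd k (fun x => -(g x)) x = -(pd k g x) := by
  simp [pd, fderiv_neg]

lemma pd_cmul (c : ℝ) {g : F6} {x : Fin 6 → ℝ} (hg : DifferentiableAt ℝ g x) (k : Fin 6) :
    pd k (fun x => c * g x) x = c * pd k g x := by
  simp [pd, fderiv_const_mul hg c]

lemma pd_mul {g h : F6} {x : Fin 6 → ℝ} (hg : DifferentiableAt ℝ g x)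
    (hh : DifferentiableAt ℝ h x) (k : Fin 6) :
    pd k (fun x => g x * h x) x = pd k g x * h x + g x * pd k h x := by
  simp [pd, fderiv_fun_mul hg hh]; ring

lemma pd_sum (g : Fin 6 → F6) {x : Fin 6 → ℝ} (hg : ∀ l, DifferentiableAt ℝ (g l) x)
    (k : Fin 6) : pd k (fun x => ∑ l, g l x) x = ∑ l, pd k (g l) x := by
  simp [pd, fderiv_fun_sum (fun l _ => hg l)]

/-! ### Generic first-order operators -/

noncomputable def Opc (c : Fin 6 → F6) : Op := fun f x => ∑ k, c k x * pd k f x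

lemma Opc_smooth {c : Fin 6 → F6} (hc : ∀ k, ContDiff ℝ (⊤ : ℕ∞) (c k)) {f : F6}
    (hf : ContDiff ℝ (⊤ : ℕ∞) f) : ContDiff ℝ (⊤ : ℕ∞) (Opc c f) :=
  ContDiff.sum fun k _ => (hc k).mul (pd_smooth hf k)

lemma pd_Opc {c : Fin 6 → F6} (hc : ∀ k, ContDiff ℝ (⊤ : ℕ∞) (c k)) {f : F6}
    (hf : ContDiff ℝ (⊤ : ℕ∞) f) (i : Fin 6) (x : Fin 6 → ℝ) :
    pd i (Opc c f) x = ∑ k, (pd i (c k) x * pd k f x + c k x * pd i (pd k f) x) := by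
  have h1 : pd i (Opc c f) x = ∑ k, pd i (fun x => c k x * pd k f x) x :=
    pd_sum _ (fun l => ((hc l).differentiable (by simp) x).mul
      ((pd_smooth hf l).differentiable (by simp) x)) i
  rw [h1]
  exact Finset.sum_congr rfl fun k _ =>
    pd_mul ((hc k).differentiable (by simp) x) ((pd_smooth hf k).differentiable (by simp) x) i

lemma opComm_Opc {a b : Fin 6 → F6} (ha : ∀ k, ContDiff ℝ (⊤ : ℕ∞) (a k))
    (hb : ∀ k, ContDiff ℝ (⊤ : ℕ∞) (b k))
    (h : ∀ (l : Fin 6) (x : Fin 6 → ℝ),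
      ∑ k, (a k x * pd k (b l) x - b k x * pd k (a l) x) = 0)
    {f : F6} (hf : ContDiff ℝ (⊤ : ℕ∞) f) : Opc a (Opc b f) = Opc b (Opc a f) := by
  funext x
  have expand : ∀ (u v : Fin 6 → F6), (∀ k, ContDiff ℝ (⊤ : ℕ∞) (u k)) → (∀ k, ContDiff ℝ (⊤ : ℕ∞) (v k)) →
      Opc u (Opc v f) x = (∑ k, ∑ l, u k x * pd k (v l) x * pd l f x)
        + ∑ k, ∑ l, u k x * v l x * pd k (pd l f) x := by
    intro u v hu hv
    show (∑ k, u k x * pd k (Opc v f) x) = _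
    rw [← Finset.sum_add_distrib]
    refine Finset.sum_congr rfl fun k _ => ?_
    rw [pd_Opc hv hf k x, Finset.mul_sum, ← Finset.sum_add_distrib]
    refine Finset.sum_congr rfl fun l _ => by ring
  rw [expand a b ha hb, expand b a hb ha]
  have e2 : ∑ k, ∑ l, a k x * b l x * pd k (pd l f) x
      = ∑ k, ∑ l, b k x * a l x * pd k (pd l f) x := by
    rw [Finset.sum_comm]
    refine Finset.sum_congr rfl fun k _ => Finset.sum_congr rfl fun l _ => ?_
    rw [pd_comm hf l k x]; ring
  have e1 : ∑ k, ∑ l, a k x * pd k (b l) x * pd l f x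
      = ∑ k, ∑ l, b k x * pd k (a l) x * pd l f x := by
    have swap : ∀ u v : Fin 6 → F6, ∑ k, ∑ l, u k x * pd k (v l) x * pd l f x
        = ∑ l, (∑ k, u k x * pd k (v l) x) * pd l f x := by
      intro u v
      rw [Finset.sum_comm]
      exact Finset.sum_congr rfl fun l _ => by rw [Finset.sum_mul]
    rw [swap a b, swap b a]
    refine Finset.sum_congr rfl fun l _ => ?_
    have h2 : ∑ k, a k x * pd k (b l) x = ∑ k, b k x * pd k (a l) x := by
      have := h l x
      rwa [Finset.sum_sub_distrib, sub_eq_zero] at this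
    rw [h2]
  rw [e1, e2]
@[simp] lemma vecCons_val_five {α : Type*} (a : α) (u : Fin 5 → α) :
    Matrix.vecCons a u 5 = u 4 := rfl
/-! ### Concrete coefficients -/

noncomputable def cD : Fin 6 → F6 :=
  ![fun x => -(2⁻¹ * x 1), fun _ => 0, fun x => -(2⁻¹ * x 4), fun _ => 0,
    fun x => -(x 3), fun _ => 1]
noncomputable def cA1 : Fin 6 → F6 :=
  ![fun _ => -1, fun _ => 0, fun _ => 0, fun _ => 0, fun _ => 0, fun _ => 0]
noncomputable def cA2 : Fin 6 → F6 :=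
  ![fun x => 2⁻¹ * x 5, fun _ => -1, fun _ => 0, fun _ => 0, fun _ => 0, fun _ => 0]
noncomputable def cB1 : Fin 6 → F6 :=
  ![fun _ => 0, fun _ => 0, fun _ => -1, fun _ => 0, fun _ => 0, fun _ => 0]
noncomputable def cB2 : Fin 6 → F6 :=
  ![fun _ => 0, fun _ => 0, fun x => -(4⁻¹ * (x 5 * x 5)), fun _ => -1,
    fun x => x 5, fun _ => 0]
noncomputable def cC : Fin 6 → F6 :=
  ![fun _ => 0, fun _ => 0, fun x => 2⁻¹ * x 5, fun _ => 0, fun _ => -1, fun _ => 0]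
noncomputable def cLd : Fin 6 → F6 :=
  ![fun _ => 0, fun _ => 0, fun _ => 0, fun _ => 0, fun _ => 0, fun _ => -1]

lemma contDiff_coord (j : Fin 6) : ContDiff ℝ (⊤ : ℕ∞) (fun x : Fin 6 → ℝ => x j) :=
  (ContinuousLinearMap.proj j : (Fin 6 → ℝ) →L[ℝ] ℝ).contDiff

lemma hcD : ∀ k, ContDiff ℝ (⊤ : ℕ∞) (cD k) := by
  intro k; fin_cases k
  · exact (contDiff_const.mul (contDiff_coord 1)).neg
  · exact contDiff_const
  · exact (contDiff_const.mul (contDiff_coord 4)).neg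
  · exact contDiff_const
  · exact (contDiff_coord 3).neg
  · exact contDiff_const

lemma Dop_eq : Dop = Opc cD := by
  funext f x
  simp only [Dop, Opc, Fin.sum_univ_six, cD, Matrix.cons_val_zero, Matrix.cons_val_one,
    Matrix.head_cons, Matrix.cons_val_two, Matrix.tail_cons, Matrix.cons_val_three,
    Matrix.cons_val_four, cons_val_five]
  ring
lemma hcA1 : ∀ k, ContDiff ℝ (⊤ : ℕ∞) (cA1 k) := by
  intro k; fin_cases k <;> exact contDiff_const

lemma hcA2 : ∀ k, ContDiff ℝ (⊤ : ℕ∞) (cA2 k) := by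
  intro k; fin_cases k
  · exact contDiff_const.mul (contDiff_coord 5)
  all_goals exact contDiff_const

lemma hcB1 : ∀ k, ContDiff ℝ (⊤ : ℕ∞) (cB1 k) := by
  intro k; fin_cases k <;> exact contDiff_const

lemma hcB2 : ∀ k, ContDiff ℝ (⊤ : ℕ∞) (cB2 k) := by
  intro k; fin_cases k
  · exact contDiff_const
  · exact contDiff_const
  · exact (contDiff_const.mul ((contDiff_coord 5).mul (contDiff_coord 5))).neg
  · exact contDiff_const
  · exact contDiff_coord 5
  · exact contDiff_const

lemma hcC : ∀ k, ContDiff ℝ (⊤ : ℕ∞) (cC k) := by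
  intro k; fin_cases k
  · exact contDiff_const
  · exact contDiff_const
  · exact contDiff_const.mul (contDiff_coord 5)
  all_goals exact contDiff_const

lemma hcLd : ∀ k, ContDiff ℝ (⊤ : ℕ∞) (cLd k) := by
  intro k; fin_cases k <;> exact contDiff_const

lemma La1_eq : La1 = Opc cA1 := by
  funext f x
  simp only [La1, Opc, Fin.sum_univ_six, cA1, Matrix.cons_val_zero, Matrix.cons_val_one,
    Matrix.head_cons, Matrix.cons_val_two, Matrix.tail_cons, Matrix.cons_val_three,
    Matrix.cons_val_four, cons_val_five]
  ring

lemma La2_eq : La2 = Opc cA2 := by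
  funext f x
  simp only [La2, Opc, Fin.sum_univ_six, cA2, Matrix.cons_val_zero, Matrix.cons_val_one,
    Matrix.head_cons, Matrix.cons_val_two, Matrix.tail_cons, Matrix.cons_val_three,
    Matrix.cons_val_four, cons_val_five]
  ring

lemma Lb1_eq : Lb1 = Opc cB1 := by
  funext f x
  simp only [Lb1, Opc, Fin.sum_univ_six, cB1, Matrix.cons_val_zero, Matrix.cons_val_one,
    Matrix.head_cons, Matrix.cons_val_two, Matrix.tail_cons, Matrix.cons_val_three,
    Matrix.cons_val_four, cons_val_five]
  ring

lemma Lb2_eq : Lb2 = Opc cB2 := by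
  funext f x
  simp only [Lb2, Opc, Fin.sum_univ_six, cB2, Matrix.cons_val_zero, Matrix.cons_val_one,
    Matrix.head_cons, Matrix.cons_val_two, Matrix.tail_cons, Matrix.cons_val_three,
    Matrix.cons_val_four, cons_val_five]
  ring

lemma Lc_eq : Lc = Opc cC := by
  funext f x
  simp only [Lc, Opc, Fin.sum_univ_six, cC, Matrix.cons_val_zero, Matrix.cons_val_one,
    Matrix.head_cons, Matrix.cons_val_two, Matrix.tail_cons, Matrix.cons_val_three,
    Matrix.cons_val_four, cons_val_five]
  ring

lemma Ld_eq : Ld = Opc cLd := by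
  funext f x
  simp only [Ld, Opc, Fin.sum_univ_six, cLd, Matrix.cons_val_zero, Matrix.cons_val_one,
    Matrix.head_cons, Matrix.cons_val_two, Matrix.tail_cons, Matrix.cons_val_three,
    Matrix.cons_val_four, cons_val_five]
  ring

lemma hIdA1 : ∀ (l : Fin 6) (x : Fin 6 → ℝ),
    ∑ k, (cD k x * pd k (cA1 l) x - cA1 k x * pd k (cD l) x) = 0 := by
  intro l x
  fin_cases l <;>
    simp [cD, cA1, Fin.sum_univ_six, pd_coord, pd_const, pd_neg, pd_cmul, pd_mul, Matrix.vecHead, Matrix.vecTail]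
lemma hIdA2 : ∀ (l : Fin 6) (x : Fin 6 → ℝ),
    ∑ k, (cD k x * pd k (cA2 l) x - cA2 k x * pd k (cD l) x) = 0 := by
  intro l x
  fin_cases l <;>
    simp [cD, cA2, Fin.sum_univ_six, pd_coord, pd_const, pd_neg, pd_cmul, pd_mul,
      Matrix.vecHead, Matrix.vecTail]

lemma hIdB1 : ∀ (l : Fin 6) (x : Fin 6 → ℝ),
    ∑ k, (cD k x * pd k (cB1 l) x - cB1 k x * pd k (cD l) x) = 0 := by
  intro l x
  fin_cases l <;>
    simp [cD, cB1, Fin.sum_univ_six, pd_coord, pd_const, pd_neg, pd_cmul, pd_mul,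
      Matrix.vecHead, Matrix.vecTail]

lemma hIdB2 : ∀ (l : Fin 6) (x : Fin 6 → ℝ),
    ∑ k, (cD k x * pd k (cB2 l) x - cB2 k x * pd k (cD l) x) = 0 := by
  intro l x
  fin_cases l <;>
    simp [cD, cB2, Fin.sum_univ_six, pd_coord, pd_const, pd_neg, pd_cmul, pd_mul,
      Matrix.vecHead, Matrix.vecTail] <;> ring

lemma hIdC : ∀ (l : Fin 6) (x : Fin 6 → ℝ),
    ∑ k, (cD k x * pd k (cC l) x - cC k x * pd k (cD l) x) = 0 := by
  intro l x
  fin_cases l <;>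
    simp [cD, cC, Fin.sum_univ_six, pd_coord, pd_const, pd_neg, pd_cmul, pd_mul,
      Matrix.vecHead, Matrix.vecTail] <;> ring

lemma hIdLd : ∀ (l : Fin 6) (x : Fin 6 → ℝ),
    ∑ k, (cD k x * pd k (cLd l) x - cLd k x * pd k (cD l) x) = 0 := by
  intro l x
  fin_cases l <;>
    simp [cD, cLd, Fin.sum_univ_six, pd_coord, pd_const, pd_neg, pd_cmul, pd_mul,
      Matrix.vecHead, Matrix.vecTail]

lemma Dop_smooth {g : F6} (hg : ContDiff ℝ (⊤ : ℕ∞) g) : ContDiff ℝ (⊤ : ℕ∞) (Dop g) := by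
  rw [Dop_eq]; exact Opc_smooth hcD hg

lemma iter_comm (cL : Fin 6 → F6) (hcL : ∀ k, ContDiff ℝ (⊤ : ℕ∞) (cL k))
    (hId : ∀ (l : Fin 6) (x : Fin 6 → ℝ),
      ∑ k, (cD k x * pd k (cL l) x - cL k x * pd k (cD l) x) = 0)
    (p : ℕ) : ∀ {g : F6}, ContDiff ℝ (⊤ : ℕ∞) g → Dop^[p] (Opc cL g) = Opc cL (Dop^[p] g) := by
  induction p with
  | zero => intro g _; simp
  | succ n ih =>
    intro g hg
    rw [Function.iterate_succ_apply, Function.iterate_succ_apply]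
    have step : Dop (Opc cL g) = Opc cL (Dop g) := by
      rw [Dop_eq]; exact opComm_Opc hcD hcL hId hg
    rw [step, ih (Dop_smooth hg)]

theorem stmt_13 (p : ℕ) (hp : 1 ≤ p) (f : F6) (hf : ContDiff ℝ (⊤ : ℕ∞) f) :
    ∀ j : Fin 6, opComm (Dop^[p]) (![La1, La2, Lb1, Lb2, Lc, Ld] j) f = 0 := by
  intro j
  have main : ∀ (L : Op) (cL : Fin 6 → F6), L = Opc cL → (∀ k, ContDiff ℝ (⊤ : ℕ∞) (cL k)) →
      (∀ (l : Fin 6) (x : Fin 6 → ℝ),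
        ∑ k, (cD k x * pd k (cL l) x - cL k x * pd k (cD l) x) = 0) →
      opComm (Dop^[p]) L f = 0 := by
    intro L cL hLeq hcL hId
    show Dop^[p] (L f) - L (Dop^[p] f) = 0
    rw [hLeq, iter_comm cL hcL hId p hf, sub_self]
  fin_cases j
  · exact main La1 cA1 La1_eq hcA1 hIdA1
  · exact main La2 cA2 La2_eq hcA2 hIdA2
  · exact main Lb1 cB1 Lb1_eq hcB1 hIdB1
  · exact main Lb2 cB2 Lb2_eq hcB2 hIdB2
  · exact main Lc cC Lc_eq hcC hIdC
  · exact main Ld cLd Ld_eq hcLd hIdLd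
end
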